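/- Let R be a finite commutative local ring of odd characteristic in which -1 is not a square of a unit, let z be a unit of R that is not a square of a unit, and let ν be a positive odd integer. Then I_{2ν} ⊕ (z) is cogredient to H_{2ν} ⊕ (1) over R. -/

import Mathlib

/-- Two square matrices are cogredient if `P * S1 * P.transpose = S2` for some invertible `P`. -/
def Cogredient {R : Type*} [CommRing R] {n : Type*} [Fintype n] [DecidableEq n]
    (S1 S2 : Matrix n n R) : Prop :=
  ∃ P : Matrix n n R, IsUnit P.det ∧ P * S1 * P.transpose = S2

/-- Block diagonal sum `A ⊕ B` of square matrices. -/
def matOplus {R : Type*} [CommRing R] {a b : ℕ}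
    (A : Matrix (Fin a) (Fin a) R) (B : Matrix (Fin b) (Fin b) R) :
    Matrix (Fin (a + b)) (Fin (a + b)) R :=
  (Matrix.reindex finSumFinEquiv finSumFinEquiv) (Matrix.fromBlocks A 0 0 B)

/-- The hyperbolic matrix `H_{2ν} = [[0, I_ν], [I_ν, 0]]`. -/
def hypMat (R : Type*) [CommRing R] (ν : ℕ) : Matrix (Fin (ν + ν)) (Fin (ν + ν)) R :=
  (Matrix.reindex finSumFinEquiv finSumFinEquiv)
    (Matrix.fromBlocks (0 : Matrix (Fin ν) (Fin ν) R) 1 1 0)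

/-!
The residue field `k` of `R` is a finite field of odd characteristic, and since the map
`y ↦ 2 y + y ^ 2` is a bijection of the maximal ideal, a unit of `R` is a square as soon as its
residue is. In `k`, `-1` is a sum of two squares and the product of two non-squares is a square;
lifting, `-1 = a ^ 2 + b ^ 2` and `z = -h ^ 2` in `R`. Hence `(z) ≅ (-1)`, `I₂ ≅ -I₂` via
`[[a, b], [-b, a]]`, `diag(1, -1) ≅ diag(-1, 1)` by a swap, and `H_{2ν} ≅ I_ν ⊕ -I_ν`.
As `ν` is odd, `I_ν ⊕ (-1)` splits into `(ν - 1) / 2` copies of `I₂` and one `diag(1, -1)`, so it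
is cogredient to its negative, which turns `I_ν ⊕ I_ν ⊕ (-1)` into `I_ν ⊕ -I_ν ⊕ (1)`.
-/

open IsLocalRing Matrix

theorem isUnit_two_of_odd_ringChar {R : Type*} [CommRing R] (h : Odd (ringChar R)) :
    IsUnit (2 : R) := by
  obtain ⟨t, ht⟩ := h
  refine .of_mul_eq_one ((t : R) + 1) ?_
  have : ((2 * t + 1 : ℕ) : R) = 0 := ht ▸ ringChar.Nat.cast_ringChar
  push_cast at this
  linear_combination this

namespace FiniteField

variable {F : Type*} [Field F] [Finite F]

theorem isSquare_mul_of_not_isSquare (hF : ringChar F ≠ 2) {a b : F} (ha : ¬IsSquare a)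
    (hb : ¬IsSquare b) : IsSquare (a * b) := by
  have := Fintype.ofFinite F
  have ha0 : a ≠ 0 := by rintro rfl; exact ha ⟨0, by simp⟩
  have hb0 : b ≠ 0 := by rintro rfl; exact hb ⟨0, by simp⟩
  have hpow (c : F) (hc : c ≠ 0) (hns : ¬IsSquare c) : c ^ (Fintype.card F / 2) = -1 :=
    (pow_dichotomy hF hc).resolve_left (mt (isSquare_iff hF hc).mpr hns)
  rw [isSquare_iff hF (mul_ne_zero ha0 hb0), mul_pow, hpow a ha0 ha, hpow b hb0 hb]
  ring

open Polynomial in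
theorem exists_sq_add_sq_eq_neg_one (hF : ringChar F ≠ 2) : ∃ a b : F, a ^ 2 + b ^ 2 = -1 := by
  have := Fintype.ofFinite F
  obtain ⟨a, b, hab⟩ := exists_root_sum_quadratic (f := X ^ 2) (g := X ^ 2 + 1)
    (degree_X_pow 2) (by compute_degree!) (odd_card_of_char_ne_two hF)
  exact ⟨a, b, by simp only [eval_add, eval_pow, eval_X, eval_one] at hab; linear_combination hab⟩

end FiniteField

section FiniteLocalRing

variable {R : Type*} [CommRing R] [IsLocalRing R]

theorem ringChar_residueField_ne_two (h2 : IsUnit (2 : R)) : ringChar (ResidueField R) ≠ 2 := by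
  intro hchar
  have h20 : ((2 : ℕ) : ResidueField R) = 0 := hchar ▸ ringChar.Nat.cast_ringChar
  exact (residue_ne_zero_iff_isUnit 2).mpr h2 (by rw [map_ofNat]; exact_mod_cast h20)

variable [Finite R]

instance : Finite (ResidueField R) := .of_surjective _ residue_surjective

/-- `y ↦ 2 y + y ^ 2` is injective on the maximal ideal because `2 + y + y'` is a unit there. -/
theorem exists_one_add_sq_eq_one_add (h2 : IsUnit (2 : R)) {x : R} (hx : x ∈ maximalIdeal R) :
    ∃ y, (1 + y) ^ 2 = 1 + x := by
  let f : maximalIdeal R → maximalIdeal R := fun y =>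
    ⟨2 * y + y ^ 2, add_mem (Ideal.mul_mem_left _ _ y.2) (Ideal.pow_mem_of_mem _ y.2 2 two_pos)⟩
  have hf : Function.Injective f := by
    rintro ⟨y, hy⟩ ⟨y', hy'⟩ h
    have hunit : IsUnit (2 + y + y') := by
      rw [← residue_ne_zero_iff_isUnit, map_add, map_add, (residue_eq_zero_iff y).mpr hy,
        (residue_eq_zero_iff y').mpr hy', add_zero, add_zero, residue_ne_zero_iff_isUnit]
      exact h2
    have h' : (y - y') * (2 + y + y') = 0 := by
      have := congrArg Subtype.val h
      simp only [f] at this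
      linear_combination this
    ext
    simpa [sub_eq_zero] using hunit.mul_left_eq_zero.mp h'
  obtain ⟨y, hy⟩ := (Finite.injective_iff_surjective.mp hf) ⟨x, hx⟩
  refine ⟨y, ?_⟩
  have := congrArg Subtype.val hy
  simp only [f] at this
  linear_combination this

theorem exists_unit_sq_eq_of_isSquare_residue (h2 : IsUnit (2 : R)) {u : R} (hu : IsUnit u)
    (hsq : IsSquare (residue R u)) : ∃ a : Rˣ, u = a ^ 2 := by
  obtain ⟨s, hs⟩ := hsq
  obtain ⟨r, rfl⟩ := residue_surjective s
  have hr : IsUnit r := by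
    rw [← residue_ne_zero_iff_isUnit]
    rintro h0
    rw [h0, mul_zero, residue_eq_zero_iff] at hs
    exact (mem_maximalIdeal u).mp hs hu
  obtain ⟨v, hrv⟩ : ∃ v, r * v = 1 := hr.exists_right_inv
  obtain ⟨y, hy⟩ := exists_one_add_sq_eq_one_add h2 (x := u * v ^ 2 - 1) (by
    rw [← residue_eq_zero_iff, map_sub, map_mul, map_pow, hs, map_one]
    have hrv' := congrArg (residue R) hrv
    rw [map_mul, map_one] at hrv'
    linear_combination (residue R r * residue R v + 1) * hrv')
  have hw : u = (r * (1 + y)) ^ 2 := by linear_combination (-r ^ 2) * hy - u * (r * v + 1) * hrv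
  obtain ⟨w, hw'⟩ : IsUnit (r * (1 + y)) := (isUnit_pow_iff two_ne_zero).mp (hw ▸ hu)
  exact ⟨w, by rw [hw, ← hw']⟩

theorem not_isSquare_residue_of_forall_ne_sq (h2 : IsUnit (2 : R)) {u : R} (hu : IsUnit u)
    (h : ∀ a : Rˣ, u ≠ a ^ 2) : ¬IsSquare (residue R u) := fun hsq =>
  let ⟨a, ha⟩ := exists_unit_sq_eq_of_isSquare_residue h2 hu hsq
  h a ha

theorem exists_sq_add_sq_eq_neg_one_of_forall_ne_sq (h2 : IsUnit (2 : R))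
    (hm1 : ∀ a : Rˣ, (-1 : R) ≠ a ^ 2) : ∃ a b : R, a ^ 2 + b ^ 2 = -1 := by
  have hm1' := not_isSquare_residue_of_forall_ne_sq h2 isUnit_one.neg hm1
  obtain ⟨α, β, hαβ⟩ := FiniteField.exists_sq_add_sq_eq_neg_one (ringChar_residueField_ne_two h2)
  obtain ⟨b, rfl⟩ := residue_surjective β
  have hres : residue R (-1 - b ^ 2) = α * α := by
    rw [map_sub, map_pow, map_neg, map_one]; linear_combination -hαβ
  have hα : α ≠ 0 := by
    rintro rfl
    exact hm1' ⟨residue R b, by rw [map_neg, map_one]; linear_combination -hαβ⟩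
  obtain ⟨a, ha⟩ := exists_unit_sq_eq_of_isSquare_residue h2
    ((residue_ne_zero_iff_isUnit _).mp (by rw [hres]; exact mul_ne_zero hα hα)) ⟨α, hres⟩
  exact ⟨a, b, by linear_combination -ha⟩

theorem exists_eq_neg_sq_of_forall_ne_sq (h2 : IsUnit (2 : R))
    (hm1 : ∀ a : Rˣ, (-1 : R) ≠ a ^ 2) (z : Rˣ) (hz : ∀ a : Rˣ, z ≠ a ^ 2) :
    ∃ h : Rˣ, (z : R) = -h ^ 2 := by
  have hm1' := not_isSquare_residue_of_forall_ne_sq h2 isUnit_one.neg hm1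
  have hz' := not_isSquare_residue_of_forall_ne_sq h2 z.isUnit fun a ha =>
    hz a (Units.ext (by simpa using ha))
  obtain ⟨h, hh⟩ := exists_unit_sq_eq_of_isSquare_residue h2 z.isUnit.neg (by
    simpa using
      FiniteField.isSquare_mul_of_not_isSquare (ringChar_residueField_ne_two h2) hm1' hz')
  exact ⟨h, by linear_combination -hh⟩

end FiniteLocalRing

namespace Cogredient

variable {R : Type*} [CommRing R] {n : Type*} [Fintype n] [DecidableEq n]
  {S₁ S₂ S₃ : Matrix n n R}

@[refl]
theorem refl (S : Matrix n n R) : Cogredient S S :=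
  ⟨1, by simp, by simp⟩

theorem symm (h : Cogredient S₁ S₂) : Cogredient S₂ S₁ := by
  obtain ⟨P, hP, rfl⟩ := h
  refine ⟨P⁻¹, by simpa using hP, ?_⟩
  rw [transpose_nonsing_inv, Matrix.mul_assoc, Matrix.mul_assoc,
    mul_nonsing_inv _ (by simpa using hP), Matrix.mul_one, ← Matrix.mul_assoc,
    nonsing_inv_mul _ hP, Matrix.one_mul]

theorem trans (h₁₂ : Cogredient S₁ S₂) (h₂₃ : Cogredient S₂ S₃) : Cogredient S₁ S₃ := by
  obtain ⟨P, hP, rfl⟩ := h₁₂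
  obtain ⟨Q, hQ, rfl⟩ := h₂₃
  exact ⟨Q * P, by simpa using hQ.mul hP, by simp only [transpose_mul, Matrix.mul_assoc]⟩

instance : @Trans (Matrix n n R) (Matrix n n R) (Matrix n n R) Cogredient Cogredient Cogredient :=
  ⟨trans⟩

theorem of_mul_mul_transpose_eq (P : Matrix n n R) (h : P * S₁ * Pᵀ = S₂)
    (hS₂ : IsUnit S₂.det) : Cogredient S₁ S₂ := by
  refine ⟨P, ?_, h⟩
  rw [← h, det_mul, det_mul, det_transpose] at hS₂
  exact isUnit_of_mul_isUnit_left (isUnit_of_mul_isUnit_left hS₂)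

theorem submatrix_perm (σ : Equiv.Perm n) (S : Matrix n n R) : Cogredient S (S.submatrix σ σ) := by
  refine ⟨σ.permMatrix R, by rw [det_permutation]; exact σ.sign.isUnit.map (Int.castRingHom R), ?_⟩
  rw [transpose_permMatrix, PEquiv.toMatrix_toPEquiv_mul, PEquiv.mul_toMatrix_toPEquiv]
  rfl

theorem sq_smul {r : R} (hr : IsUnit r) (S : Matrix n n R) : Cogredient S (r ^ 2 • S) :=
  ⟨r • 1, by simpa using hr.pow _, by simp [sq, smul_smul]⟩

theorem reindex {m : Type*} [Fintype m] [DecidableEq m] (e : n ≃ m) (h : Cogredient S₁ S₂) :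
    Cogredient (reindex e e S₁) (reindex e e S₂) := by
  obtain ⟨P, hP, rfl⟩ := h
  refine ⟨Matrix.reindex e e P, by simpa using hP, ?_⟩
  simp only [reindex_apply, transpose_submatrix, submatrix_mul_equiv]

theorem fromBlocks {m : Type*} [Fintype m] [DecidableEq m] {A A' : Matrix n n R}
    {B B' : Matrix m m R} (hA : Cogredient A A') (hB : Cogredient B B') :
    Cogredient (fromBlocks A 0 0 B) (fromBlocks A' 0 0 B') := by
  obtain ⟨P, hP, rfl⟩ := hA
  obtain ⟨Q, hQ, rfl⟩ := hB
  refine ⟨Matrix.fromBlocks P 0 0 Q, by simpa [det_fromBlocks_zero₂₁] using hP.mul hQ, ?_⟩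
  simp [fromBlocks_transpose, fromBlocks_multiply]

end Cogredient

section Blocks

variable {R : Type*} [CommRing R] {l m n : Type*}

theorem Matrix.reindex_sumCongr_fromBlocks {l' m' : Type*} (e : l ≃ l') (f : m ≃ m')
    (A : Matrix l l R) (B : Matrix m m R) :
    reindex (e.sumCongr f) (e.sumCongr f) (fromBlocks A 0 0 B) =
      fromBlocks (reindex e e A) 0 0 (reindex f f B) := by
  ext (i | i) (j | j) <;> simp

theorem Matrix.fromBlocks_fromBlocks_assoc (A : Matrix l l R) (B : Matrix m m R)
    (C : Matrix n n R) :
    fromBlocks (fromBlocks A 0 0 B) 0 0 C =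
      reindex (Equiv.sumAssoc l m n).symm (Equiv.sumAssoc l m n).symm
        (fromBlocks A 0 0 (fromBlocks B 0 0 C)) := by
  ext ((i | i) | i) ((j | j) | j) <;> simp

variable [Fintype l] [Fintype m] [Fintype n] [DecidableEq l] [DecidableEq m] [DecidableEq n]

theorem Cogredient.fromBlocks_assoc {A A' : Matrix l l R} {B B' : Matrix m m R}
    {C C' : Matrix n n R}
    (h : Cogredient (Matrix.fromBlocks A 0 0 (Matrix.fromBlocks B 0 0 C))
      (Matrix.fromBlocks A' 0 0 (Matrix.fromBlocks B' 0 0 C'))) :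
    Cogredient (Matrix.fromBlocks (Matrix.fromBlocks A 0 0 B) 0 0 C)
      (Matrix.fromBlocks (Matrix.fromBlocks A' 0 0 B') 0 0 C') := by
  rw [fromBlocks_fromBlocks_assoc, fromBlocks_fromBlocks_assoc]
  exact h.reindex _

theorem cogredient_fromBlocks_swap (A B : Matrix m m R) :
    Cogredient (fromBlocks A 0 0 B) (fromBlocks B 0 0 A) := by
  simpa using Cogredient.submatrix_perm (Equiv.sumComm m m) (fromBlocks A 0 0 B)

theorem Matrix.isUnit_det_neg_one : IsUnit (-1 : Matrix m m R).det := by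
  rw [det_neg, det_one, mul_one]
  exact isUnit_one.neg.pow _

theorem cogredient_hyperbolic (h2 : IsUnit (2 : R)) :
    Cogredient (fromBlocks 0 1 1 0 : Matrix (m ⊕ m) (m ⊕ m) R) (fromBlocks 1 0 0 (-1)) := by
  obtain ⟨c, hc⟩ := h2.exists_right_inv
  have hc1 : c • (1 : Matrix m m R) + c • 1 = 1 := by rw [← add_smul, ← two_mul, hc, one_smul]
  refine .of_mul_mul_transpose_eq (fromBlocks 1 (c • 1) 1 (-(c • 1))) ?_ ?_
  · simp [fromBlocks_transpose, fromBlocks_multiply, hc1, ← neg_add]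
  · simpa [det_fromBlocks_zero₂₁] using isUnit_det_neg_one

theorem cogredient_one_neg_one {a b : R} (hab : a ^ 2 + b ^ 2 = -1) :
    Cogredient (1 : Matrix (m ⊕ m) (m ⊕ m) R) (-1) := by
  refine .of_mul_mul_transpose_eq (fromBlocks (a • 1) (b • 1) (-(b • 1)) (a • 1)) ?_
    isUnit_det_neg_one
  simp only [mul_one, fromBlocks_transpose, transpose_smul, transpose_one, transpose_neg,
    fromBlocks_multiply, Algebra.mul_smul_comm, mul_neg, smul_neg, neg_neg]
  rw [← fromBlocks_one, fromBlocks_neg, neg_zero]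
  congr 1 <;> first | module | linear_combination (norm := module) hab • (1 : Matrix m m R)

theorem cogredient_fromBlocks_one_neg_one {a b : R} (hab : a ^ 2 + b ^ 2 = -1) :
    Cogredient (fromBlocks (1 : Matrix ((m ⊕ m) ⊕ n) ((m ⊕ m) ⊕ n) R) 0 0 (-1 : Matrix n n R))
      (fromBlocks (-1) 0 0 1) := by
  rw [← fromBlocks_one (l := m ⊕ m) (m := n), fromBlocks_neg]
  simp only [neg_zero]
  exact .fromBlocks_assoc <| .fromBlocks (cogredient_one_neg_one (m := m) hab)
    (cogredient_fromBlocks_swap (1 : Matrix n n R) (-1))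

end Blocks

theorem cogredient_fromBlocks_one_neg_one_of_odd {R : Type*} [CommRing R] {ν : ℕ} (hν : Odd ν)
    {a b : R} (hab : a ^ 2 + b ^ 2 = -1) :
    Cogredient (fromBlocks (1 : Matrix (Fin ν) (Fin ν) R) 0 0 (-1 : Matrix (Fin 1) (Fin 1) R))
      (fromBlocks (-1) 0 0 1) := by
  obtain ⟨k, rfl⟩ := hν
  let e : (Fin k ⊕ Fin k) ⊕ Fin 1 ≃ Fin (2 * k + 1) :=
    (finSumFinEquiv.sumCongr (.refl _)).trans (finSumFinEquiv.trans (finCongr (by ring)))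
  have h := (cogredient_fromBlocks_one_neg_one (n := Fin 1) hab).reindex (e.sumCongr (.refl _))
  have hneg : reindex e e (-1 : Matrix _ _ R) = -1 := by ext i j; simp [one_apply]
  rw [reindex_sumCongr_fromBlocks, reindex_sumCongr_fromBlocks, hneg] at h
  simpa using h

theorem stmt_17_general (R : Type*) [CommRing R] [IsLocalRing R] [Fintype R]
    (hchar : Odd (ringChar R)) (hm1 : ∀ a : Rˣ, (-1 : R) ≠ (a : R) ^ 2)
    (z : Rˣ) (hz : ∀ a : Rˣ, z ≠ a ^ 2) (ν : ℕ) (hνodd : Odd ν) :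
    Cogredient (matOplus (1 : Matrix (Fin (ν + ν)) (Fin (ν + ν)) R)
        (Matrix.diagonal fun _ : Fin 1 => (z : R)))
      (matOplus (hypMat R ν) (1 : Matrix (Fin 1) (Fin 1) R)) := by
  have h2 := isUnit_two_of_odd_ringChar hchar
  obtain ⟨a, b, hab⟩ := exists_sq_add_sq_eq_neg_one_of_forall_ne_sq h2 hm1
  obtain ⟨h, hzh⟩ := exists_eq_neg_sq_of_forall_ne_sq h2 hm1 z hz
  have hz1 : Cogredient (diagonal fun _ : Fin 1 => (z : R)) (-1) := by
    have : diagonal (fun _ : Fin 1 => (z : R)) = (h : R) ^ 2 • -1 := by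
      ext i j; fin_cases i; fin_cases j; simp [hzh]
    exact this ▸ (Cogredient.sq_smul h.isUnit _).symm
  have key : Cogredient (fromBlocks (1 : Matrix (Fin ν ⊕ Fin ν) (Fin ν ⊕ Fin ν) R) 0 0
      (diagonal fun _ : Fin 1 => (z : R))) (fromBlocks (fromBlocks 0 1 1 0) 0 0 1) :=
    calc Cogredient _ (fromBlocks (1 : Matrix (Fin ν ⊕ Fin ν) (Fin ν ⊕ Fin ν) R) 0 0
          (-1 : Matrix (Fin 1) (Fin 1) R)) := .fromBlocks (.refl 1) hz1
      Cogredient _ (fromBlocks (fromBlocks 1 0 0 (-1)) 0 0 1) := by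
        rw [← fromBlocks_one (l := Fin ν) (m := Fin ν)]
        exact .fromBlocks_assoc <|
          .fromBlocks (.refl 1) (cogredient_fromBlocks_one_neg_one_of_odd hνodd hab)
      Cogredient _ (fromBlocks (fromBlocks 0 1 1 0) 0 0 1) :=
        .fromBlocks (cogredient_hyperbolic h2).symm (.refl 1)
  have := (key.reindex (finSumFinEquiv.sumCongr (.refl _))).reindex finSumFinEquiv
  simp only [reindex_sumCongr_fromBlocks] at this
  simpa [matOplus, hypMat] using this

/-- if -1 is not a square of a unit, z is a non-square unit and ν is a
positive odd integer, then `I_{2ν} ⊕ (z)` is cogredient to `H_{2ν} ⊕ (1)`. -/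
theorem stmt_17 (R : Type*) [CommRing R] [IsLocalRing R] [Fintype R]
    (hchar : Odd (ringChar R)) (hm1 : ∀ a : Rˣ, (-1 : R) ≠ (a : R) ^ 2)
    (z : Rˣ) (hz : ∀ a : Rˣ, z ≠ a ^ 2) (ν : ℕ) (hν : 0 < ν) (hνodd : Odd ν) :
    Cogredient (matOplus (1 : Matrix (Fin (ν + ν)) (Fin (ν + ν)) R)
        (Matrix.diagonal fun _ : Fin 1 => (z : R)))
      (matOplus (hypMat R ν) (1 : Matrix (Fin 1) (Fin 1) R)) :=
  stmt_17_general R hchar hm1 z hz ν hνodd
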